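/- For any $z > 1$ and fixed $p > 0$, the function $q(\alpha) = (\alpha-1)^2\,(\psi^{(1)}(\alpha) - \psi^{(1)}(\alpha+z))$ is increasing in $\alpha$ on $(1,\infty)$. -/

import Mathlib

/-!
For `x > 0` one has `ψ'(x) = ∑ₘ (x + m)⁻²`: the derivatives of the Bohr–Mollerup approximants
of `log Γ` converge locally uniformly to `-γ + ∑ₘ ((m + 1)⁻¹ - (x + m)⁻¹)`, a series that can be
differentiated termwise. Writing each term as a Laplace integral and summing the geometric
series gives
`ψ'(α) - ψ'(α + z) = ∫₀^∞ t e^{-(α-1)t} κ_z(t) dt` with `κ_z(t) = (1 - e^{-zt}) / (e^t - 1)`.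
The substitution `t = w / (α - 1)` turns `(α - 1)²` times this into
`∫₀^∞ w e^{-w} κ_z(w / (α - 1)) dw`. Since `κ_z` is decreasing on `(0, ∞)` for every `z ≥ 0`,
the integrand increases with `α`.
-/

noncomputable def digamma (x : ℝ) : ℝ := deriv (fun y => Real.log (Real.Gamma y)) x

noncomputable def trigamma (x : ℝ) : ℝ := deriv digamma x

open Real Set Filter Topology MeasureTheory

lemma summable_inv_add_nat_sq (a : ℝ) : Summable fun m : ℕ => ((a + m) ^ 2)⁻¹ := by
  simpa [rpow_two, sq_abs, add_comm] using (summable_one_div_nat_add_rpow a 2).mpr one_lt_two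

lemma hasDerivAt_logGammaSeq {x : ℝ} (hx : 0 < x) (n : ℕ) :
    HasDerivAt (BohrMollerup.logGammaSeq · n)
      (log n - ∑ m ∈ Finset.range (n + 1), (x + m)⁻¹) x := by
  have hsum : HasDerivAt (fun y => ∑ m ∈ Finset.range (n + 1), log (y + m))
      (∑ m ∈ Finset.range (n + 1), (x + m)⁻¹) x :=
    .fun_sum fun m _ => by simpa using ((hasDerivAt_id x).add_const (m : ℝ)).log (by positivity)
  unfold BohrMollerup.logGammaSeq
  simpa using (((hasDerivAt_id x).mul_const (log n)).add_const (log n.factorial)).fun_sub hsum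

lemma tendsto_log_sub_harmonic_succ :
    Tendsto (fun n : ℕ => log n - harmonic (n + 1)) atTop (𝓝 (-eulerMascheroniConstant)) := by
  have h := (tendsto_harmonic_sub_log.add tendsto_one_div_add_atTop_nhds_zero_nat).neg
  rw [add_zero] at h
  refine h.congr fun n => ?_
  simp only [harmonic_succ, Nat.cast_add, Nat.cast_one, Rat.cast_add, Rat.cast_inv,
    Rat.cast_natCast, Rat.cast_one, one_div]
  ring

noncomputable def digammaSeries (x : ℝ) : ℝ :=
  -eulerMascheroniConstant + ∑' m : ℕ, (((m : ℝ) + 1)⁻¹ - (x + m)⁻¹)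

lemma norm_inv_succ_sub_inv_add_le {a b y : ℝ} (ha : 0 < a) (ha1 : a ≤ 1) (hb : 1 ≤ b)
    (hy : y ∈ Ioo a b) (m : ℕ) :
    ‖((m : ℝ) + 1)⁻¹ - (y + m)⁻¹‖ ≤ b * ((a + m) ^ 2)⁻¹ := by
  obtain ⟨hay, hyb⟩ := hy
  have ham : 0 < a + m := by positivity
  have hym : 0 < y + m := by linarith
  have hsub : ((m : ℝ) + 1)⁻¹ - (y + m)⁻¹ = (y - 1) * (((m : ℝ) + 1) * (y + m))⁻¹ := by
    field_simp
    ring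
  rw [hsub, norm_mul, norm_inv, Real.norm_eq_abs, Real.norm_eq_abs,
    abs_of_pos (by positivity : (0 : ℝ) < ((m : ℝ) + 1) * (y + m))]
  gcongr
  · exact abs_le.mpr ⟨by linarith, by linarith⟩
  · rw [sq]
    exact mul_le_mul (by linarith) (by linarith) ham.le (by positivity)

lemma tendstoUniformlyOn_digammaSeries {a b : ℝ} (ha : 0 < a) (ha1 : a ≤ 1) (hb : 1 ≤ b) :
    TendstoUniformlyOn (fun (n : ℕ) (x : ℝ) => log n - ∑ m ∈ Finset.range (n + 1), (x + m)⁻¹)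
      digammaSeries atTop (Ioo a b) := by
  have hsum := tendstoUniformlyOn_tsum_nat ((summable_inv_add_nat_sq a).mul_left b)
    fun m y hy => norm_inv_succ_sub_inv_add_le ha ha1 hb hy m
  have hsum' : TendstoUniformlyOn
      (fun (n : ℕ) (x : ℝ) => ∑ m ∈ Finset.range (n + 1), (((m : ℝ) + 1)⁻¹ - (x + m)⁻¹))
      (fun x => ∑' m : ℕ, (((m : ℝ) + 1)⁻¹ - (x + m)⁻¹)) atTop (Ioo a b) :=
    fun u hu => (tendsto_add_atTop_nat 1).eventually (hsum u hu)
  refine ((tendsto_log_sub_harmonic_succ.tendstoUniformlyOn_const _).add hsum').congr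
    (.of_forall fun n x _ => ?_)
  simp [harmonic, Finset.sum_sub_distrib]

lemma hasDerivAt_log_Gamma {x : ℝ} (hx : 0 < x) :
    HasDerivAt (fun y => log (Gamma y)) (digammaSeries x) x := by
  obtain ⟨a, ha, hax⟩ := exists_between (lt_min hx one_pos)
  exact hasDerivAt_of_tendstoUniformlyOn isOpen_Ioo
    (tendstoUniformlyOn_digammaSeries ha (hax.trans_le (min_le_right x 1)).le
      (le_add_of_nonneg_left hx.le))
    (.of_forall fun n y hy => hasDerivAt_logGammaSeq (ha.trans hy.1) n)
    (fun y hy => BohrMollerup.tendsto_log_gamma (ha.trans hy.1))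
    ⟨hax.trans_le (min_le_left x 1), lt_add_one x⟩

lemma hasDerivAt_digammaSeries {x : ℝ} (hx : 0 < x) :
    HasDerivAt digammaSeries (∑' m : ℕ, ((x + m) ^ 2)⁻¹) x := by
  obtain ⟨a, ha, hax⟩ := exists_between (lt_min hx one_pos)
  have hterm (m : ℕ) (y : ℝ) (hy : y ∈ Ioi a) :
      HasDerivAt (fun y : ℝ => ((m : ℝ) + 1)⁻¹ - (y + m)⁻¹) ((y + m) ^ 2)⁻¹ y := by
    have hym : y + m ≠ 0 := (add_pos_of_pos_of_nonneg (ha.trans hy) m.cast_nonneg).ne'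
    simpa [neg_div] using
      ((hasDerivAt_id y).add_const (m : ℝ)).inv hym |>.const_sub (((m : ℝ) + 1)⁻¹)
  have hbound (m : ℕ) (y : ℝ) (hy : y ∈ Ioi a) : ‖((y + m) ^ 2)⁻¹‖ ≤ ((a + m) ^ 2)⁻¹ := by
    have : a < y := hy
    rw [norm_inv, norm_pow, Real.norm_eq_abs, abs_of_pos (by linarith)]
    gcongr
  exact (hasDerivAt_tsum_of_isPreconnected (summable_inv_add_nat_sq a) isOpen_Ioi
    isPreconnected_Ioi hterm hbound (hax.trans_le (min_le_right x 1))
    -- every term vanishes at `1`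
    (summable_zero.congr fun m => by simp [add_comm])
    (hax.trans_le (min_le_left x 1))).const_add _

lemma digamma_eq_digammaSeries {x : ℝ} (hx : 0 < x) : digamma x = digammaSeries x :=
  (hasDerivAt_log_Gamma hx).deriv

lemma trigamma_eq_tsum {x : ℝ} (hx : 0 < x) : trigamma x = ∑' m : ℕ, ((x + m) ^ 2)⁻¹ := by
  have h : digamma =ᶠ[𝓝 x] digammaSeries :=
    eventually_of_mem (isOpen_Ioi.mem_nhds hx) fun y hy => digamma_eq_digammaSeries hy
  rw [trigamma, h.deriv_eq, (hasDerivAt_digammaSeries hx).deriv]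

lemma integrableOn_mul_exp_neg_mul {a : ℝ} (ha : 0 < a) :
    IntegrableOn (fun t => t * exp (-(a * t))) (Ioi 0) := by
  simpa using integrableOn_rpow_mul_exp_neg_mul_rpow (s := 1) (p := 1) (by norm_num) one_pos ha

lemma integral_mul_exp_neg_mul {a : ℝ} (ha : 0 < a) :
    ∫ t in Ioi 0, t * exp (-(a * t)) = (a ^ 2)⁻¹ := by
  simpa [← neg_add, one_add_one_eq_two, rpow_neg ha.le] using
    integral_rpow_mul_exp_neg_mul_rpow (p := 1) (q := 1) one_pos (by norm_num) ha

lemma hasSum_exp_neg_add_nat_mul (x : ℝ) {t : ℝ} (ht : 0 < t) :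
    HasSum (fun m : ℕ => exp (-((x + m) * t))) (exp (-((x - 1) * t)) / (exp t - 1)) := by
  have hr : exp (-t) < 1 := exp_lt_one_iff.mpr (neg_lt_zero.mpr ht)
  have het : 1 < exp t := one_lt_exp_iff.mpr ht
  have hterm (m : ℕ) : exp (-((x + m) * t)) = exp (-(x * t)) * exp (-t) ^ m := by
    rw [← exp_nat_mul, ← exp_add]
    ring_nf
  have hsum : exp (-((x - 1) * t)) / (exp t - 1) = exp (-(x * t)) * (1 - exp (-t))⁻¹ := by
    rw [exp_neg t, show -((x - 1) * t) = -(x * t) + t by ring, exp_add]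
    field_simp
  simpa only [hterm, hsum] using
    (hasSum_geometric_of_lt_one (exp_pos (-t)).le hr).mul_left (exp (-(x * t)))

noncomputable def trigammaSubKernel (z t : ℝ) : ℝ := (1 - exp (-(z * t))) / (exp t - 1)

lemma trigamma_sub_trigamma_add_eq_integral {x z : ℝ} (hx : 0 < x) (hz : 0 < z) :
    trigamma x - trigamma (x + z) =
      ∫ t in Ioi 0, t * exp (-((x - 1) * t)) * trigammaSubKernel z t := by
  set F : ℕ → ℝ → ℝ := fun m t => t * exp (-((x + m) * t)) - t * exp (-((x + z + m) * t))
  have hpos (m : ℕ) : 0 < x + m := by positivity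
  have hpos' (m : ℕ) : 0 < x + z + m := by positivity
  have hF_integrable (m : ℕ) : IntegrableOn (F m) (Ioi 0) :=
    (integrableOn_mul_exp_neg_mul (hpos m)).sub (integrableOn_mul_exp_neg_mul (hpos' m))
  have hF_integral (m : ℕ) : ∫ t in Ioi 0, F m t = ((x + m) ^ 2)⁻¹ - ((x + z + m) ^ 2)⁻¹ := by
    rw [integral_sub (integrableOn_mul_exp_neg_mul (hpos m))
      (integrableOn_mul_exp_neg_mul (hpos' m)), integral_mul_exp_neg_mul (hpos m),
      integral_mul_exp_neg_mul (hpos' m)]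
  have hF_norm (m : ℕ) : ∫ t in Ioi 0, ‖F m t‖ = ∫ t in Ioi 0, F m t := by
    refine setIntegral_congr_fun measurableSet_Ioi fun t (ht : 0 < t) => ?_
    refine Real.norm_of_nonneg (sub_nonneg.mpr ?_)
    gcongr
    linarith
  have hF_sum {t : ℝ} (ht : 0 < t) :
      ∑' m, F m t = t * exp (-((x - 1) * t)) * trigammaSubKernel z t := by
    refine (((hasSum_exp_neg_add_nat_mul x ht).mul_left t).sub
      ((hasSum_exp_neg_add_nat_mul (x + z) ht).mul_left t)).tsum_eq.trans ?_
    rw [trigammaSubKernel, show -((x + z - 1) * t) = -((x - 1) * t) + -(z * t) by ring, exp_add]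
    ring
  calc trigamma x - trigamma (x + z)
      = ∑' m : ℕ, ∫ t in Ioi 0, F m t := by
        rw [trigamma_eq_tsum hx, trigamma_eq_tsum (by positivity),
          ← (summable_inv_add_nat_sq x).tsum_sub (summable_inv_add_nat_sq (x + z))]
        exact tsum_congr fun m => (hF_integral m).symm
    _ = ∫ t in Ioi 0, ∑' m : ℕ, F m t :=
        integral_tsum_of_summable_integral_norm hF_integrable <| by
          simpa only [hF_norm, hF_integral] using
            (summable_inv_add_nat_sq x).sub (summable_inv_add_nat_sq (x + z))
    _ = _ := setIntegral_congr_fun measurableSet_Ioi fun t ht => hF_sum ht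

lemma sq_mul_integral_mul_exp_neg_mul {c : ℝ} (hc : 0 < c) (f : ℝ → ℝ) :
    c ^ 2 * ∫ t in Ioi 0, t * exp (-(c * t)) * f t = ∫ w in Ioi 0, w * exp (-w) * f (w / c) := by
  have hsubst := integral_comp_mul_left_Ioi (fun t => t * exp (-(c * t)) * f t) 0 (inv_pos.mpr hc)
  rw [mul_zero, inv_inv, smul_eq_mul] at hsubst
  have hscale (w : ℝ) :
      w * exp (-w) * f (w / c) = c * (c⁻¹ * w * exp (-(c * (c⁻¹ * w))) * f (c⁻¹ * w)) := by
    field_simp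
  simp_rw [hscale, integral_const_mul, hsubst]
  ring

lemma mul_exp_neg_mul_mul_exp_sub_one_le {z : ℝ} (hz : 0 ≤ z) (t : ℝ) :
    z * exp (-(z * t)) * (exp t - 1) ≤ (1 - exp (-(z * t))) * exp t := by
  have hzt : exp (-(z * t)) * (1 + z * t) ≤ 1 := by
    have h := mul_le_mul_of_nonneg_left (add_one_le_exp (z * t)) (exp_pos (-(z * t))).le
    rwa [← exp_add, neg_add_cancel, exp_zero, add_comm] at h
  have ht : exp t - 1 ≤ t * exp t := by
    have h := mul_le_mul_of_nonneg_right (add_one_le_exp (-t)) (exp_pos t).le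
    rw [← exp_add, neg_add_cancel, exp_zero] at h
    linarith
  have hE := exp_pos (-(z * t))
  nlinarith [mul_le_mul_of_nonneg_left ht (mul_nonneg hz hE.le), exp_pos t]

lemma hasDerivAt_trigammaSubKernel (z : ℝ) {t : ℝ} (ht : 0 < t) :
    HasDerivAt (trigammaSubKernel z)
      ((z * exp (-(z * t)) * (exp t - 1) - (1 - exp (-(z * t))) * exp t) / (exp t - 1) ^ 2) t := by
  have hnum : HasDerivAt (fun t => 1 - exp (-(z * t))) (z * exp (-(z * t))) t :=
    (((hasDerivAt_id' t).const_mul z).fun_neg.exp.const_sub 1).congr_deriv (by ring)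
  exact hnum.div ((hasDerivAt_exp t).sub_const 1) (sub_pos.mpr (one_lt_exp_iff.mpr ht)).ne'

lemma antitoneOn_trigammaSubKernel {z : ℝ} (hz : 0 ≤ z) :
    AntitoneOn (trigammaSubKernel z) (Ioi 0) := by
  refine antitoneOn_of_deriv_nonpos (convex_Ioi 0)
    (fun t ht => (hasDerivAt_trigammaSubKernel z ht).continuousAt.continuousWithinAt)
    (fun t ht => ?_) (fun t ht => ?_) <;> rw [interior_Ioi] at ht
  · exact (hasDerivAt_trigammaSubKernel z ht).differentiableAt.differentiableWithinAt
  · rw [(hasDerivAt_trigammaSubKernel z ht).deriv]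
    exact div_nonpos_of_nonpos_of_nonneg
      (sub_nonpos.mpr (mul_exp_neg_mul_mul_exp_sub_one_le hz t)) (sq_nonneg _)

lemma trigammaSubKernel_nonneg {z t : ℝ} (hz : 0 ≤ z) (ht : 0 < t) :
    0 ≤ trigammaSubKernel z t := by
  have : exp (-(z * t)) ≤ 1 := exp_le_one_iff.mpr (by nlinarith)
  exact div_nonneg (by linarith) (by linarith [add_one_le_exp t])

lemma trigammaSubKernel_le {z t : ℝ} (hz : 0 ≤ z) (ht : 0 < t) : trigammaSubKernel z t ≤ z := by
  rw [trigammaSubKernel, div_le_iff₀ (by linarith [add_one_le_exp t])]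
  nlinarith [add_one_le_exp (-(z * t)), add_one_le_exp t]

lemma integrableOn_mul_exp_neg_mul_trigammaSubKernel {z c : ℝ} (hz : 0 ≤ z) (hc : 0 < c) :
    IntegrableOn (fun w => w * exp (-w) * trigammaSubKernel z (w / c)) (Ioi 0) := by
  refine Integrable.mono' ((integrableOn_mul_exp_neg_mul one_pos).const_mul z)
    (Measurable.aestronglyMeasurable (by unfold trigammaSubKernel; fun_prop)) ?_
  filter_upwards [ae_restrict_mem measurableSet_Ioi] with w (hw : 0 < w)
  have hwc : 0 < w / c := div_pos hw hc
  rw [Real.norm_of_nonneg (mul_nonneg (by positivity) (trigammaSubKernel_nonneg hz hwc)),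
    one_mul, mul_comm z]
  exact mul_le_mul_of_nonneg_left (trigammaSubKernel_le hz hwc) (by positivity)

lemma sub_one_sq_mul_trigamma_sub_trigamma_add_eq_integral {α z : ℝ} (hα : 1 < α) (hz : 0 < z) :
    (α - 1) ^ 2 * (trigamma α - trigamma (α + z)) =
      ∫ w in Ioi 0, w * exp (-w) * trigammaSubKernel z (w / (α - 1)) := by
  rw [trigamma_sub_trigamma_add_eq_integral (by linarith) hz,
    sq_mul_integral_mul_exp_neg_mul (sub_pos.mpr hα)]

lemma monotoneOn_sub_one_sq_mul_trigamma_sub_trigamma_add {z : ℝ} (hz : 0 < z) :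
    MonotoneOn (fun α : ℝ => (α - 1) ^ 2 * (trigamma α - trigamma (α + z))) (Ioi 1) := by
  intro α (hα : 1 < α) β (hβ : 1 < β) hαβ
  simp only [sub_one_sq_mul_trigamma_sub_trigamma_add_eq_integral hα hz,
    sub_one_sq_mul_trigamma_sub_trigamma_add_eq_integral hβ hz]
  refine setIntegral_mono_on
    (integrableOn_mul_exp_neg_mul_trigammaSubKernel hz.le (sub_pos.mpr hα))
    (integrableOn_mul_exp_neg_mul_trigammaSubKernel hz.le (sub_pos.mpr hβ)) measurableSet_Ioi
    fun w (hw : 0 < w) => mul_le_mul_of_nonneg_left ?_ (by positivity)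
  exact antitoneOn_trigammaSubKernel hz.le (div_pos hw (sub_pos.mpr hβ))
    (div_pos hw (sub_pos.mpr hα)) (div_le_div_of_nonneg_left hw.le (sub_pos.mpr hα) (by linarith))

theorem stmt_12_general (z : ℝ) (hz : 1 < z) :
    MonotoneOn (fun α : ℝ => (α - 1) ^ 2 * (trigamma α - trigamma (α + z)))
      (Set.Ioi 1) :=
  monotoneOn_sub_one_sq_mul_trigamma_sub_trigamma_add (zero_lt_one.trans hz)

theorem stmt_12 (z p : ℝ) (hz : 1 < z) (hp : 0 < p) :
    MonotoneOn (fun α : ℝ => (α - 1) ^ 2 * (trigamma α - trigamma (α + z)))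
      (Set.Ioi 1) :=
  stmt_12_general z hz
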